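/- With J(p) = Σ_{β=0}^n a_β p_β², A_α(p,q) = q_α² J(p), M_{αβ}(p,q) = a_α p_α q_β − a_β p_β q_α, B_α(p,q) = Σ_{β≠α} M_{αβ}²/(a_α − a_β), B(q) = Σ_{α} q_α²/a_α, and H(p,q) = ½ B(q) Σ_{α} p_α², one has identically on ℝ^{n+1} × ℝ^{n+1}: {H, A_α} = 2 J B q_α p_α − 4 q_α² (H/B) Σ_{β=0}^n p_β q_β and {H, B_α} = −2 J B q_α p_α + 2 B a_α p_α² Σ_{β=0}^n p_β q_β, for every α ∈ {0,…,n} (on the open set where B(q) ≠ 0). -/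

import Mathlib

open Finset

/-- Partial derivative with respect to the momentum variable `p α`. -/
noncomputable def pderivP {m : ℕ} (F : (Fin m → ℝ) → (Fin m → ℝ) → ℝ)
    (α : Fin m) (p q : Fin m → ℝ) : ℝ :=
  deriv (fun t => F (Function.update p α t) q) (p α)

/-- Partial derivative with respect to the position variable `q α`. -/
noncomputable def pderivQ {m : ℕ} (F : (Fin m → ℝ) → (Fin m → ℝ) → ℝ)
    (α : Fin m) (p q : Fin m → ℝ) : ℝ :=
  deriv (fun t => F p (Function.update q α t)) (q α)

/-- Canonical Poisson bracket on `ℝ^m × ℝ^m`: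
`{F,G} = Σ_α (∂F/∂p_α ∂G/∂q_α − ∂F/∂q_α ∂G/∂p_α)`. -/
noncomputable def pbracket {m : ℕ} (F G : (Fin m → ℝ) → (Fin m → ℝ) → ℝ)
    (p q : Fin m → ℝ) : ℝ :=
  ∑ α, (pderivP F α p q * pderivQ G α p q - pderivQ F α p q * pderivP G α p q)

/-- The dual Moser first integrals
`F_α(p,q) = q_α² Σ_β a_β p_β² + Σ_{β≠α} (a_α p_α q_β − a_β p_β q_α)²/(a_α − a_β)`. -/
noncomputable def dualMoser {m : ℕ} (a : Fin m → ℝ) (α : Fin m)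
    (p q : Fin m → ℝ) : ℝ :=
  (q α) ^ 2 * ∑ β, a β * (p β) ^ 2 +
    ∑ β ∈ univ \ {α}, (a α * p α * q β - a β * p β * q α) ^ 2 / (a α - a β)

/-- `J(p) = Σ_β a_β p_β²`. -/
noncomputable def Jfun {m : ℕ} (a : Fin m → ℝ) (p : Fin m → ℝ) : ℝ :=
  ∑ β, a β * (p β) ^ 2

/-- `A_α(p,q) = q_α² J(p)`. -/
noncomputable def Afun {m : ℕ} (a : Fin m → ℝ) (α : Fin m) (p q : Fin m → ℝ) : ℝ :=
  (q α) ^ 2 * Jfun a p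

/-- `M_{αβ}(p,q) = a_α p_α q_β − a_β p_β q_α`. -/
noncomputable def Mfun {m : ℕ} (a : Fin m → ℝ) (α β : Fin m) (p q : Fin m → ℝ) : ℝ :=
  a α * p α * q β - a β * p β * q α

/-- `B_α(p,q) = Σ_{β≠α} M_{αβ}²/(a_α − a_β)`. -/
noncomputable def Bfun {m : ℕ} (a : Fin m → ℝ) (α : Fin m) (p q : Fin m → ℝ) : ℝ :=
  ∑ β ∈ univ \ {α}, (Mfun a α β p q) ^ 2 / (a α - a β)

/-- `B(q) = Σ_α q_α²/a_α`. -/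
noncomputable def Bq {m : ℕ} (a : Fin m → ℝ) (q : Fin m → ℝ) : ℝ :=
  ∑ α, (q α) ^ 2 / a α

/-- `H(p,q) = ½ B(q) Σ_α p_α²`. -/
noncomputable def Ham {m : ℕ} (a : Fin m → ℝ) (p q : Fin m → ℝ) : ℝ :=
  (1 / 2) * Bq a q * ∑ α, (p α) ^ 2

section Helpers
variable {m : ℕ} (a : Fin m → ℝ) (p q : Fin m → ℝ)

lemma updHasDeriv (γ β : Fin m) (x : ℝ) :
    HasDerivAt (fun t => Function.update p γ t β) (if β = γ then 1 else 0) x := by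
  rcases eq_or_ne β γ with h | h
  · subst h
    simp only [Function.update_self, if_pos rfl]
    exact hasDerivAt_id x
  · simp only [Function.update_of_ne h, if_neg h]
    exact hasDerivAt_const x (p β)

lemma sqUpdHasDeriv (γ β : Fin m) :
    HasDerivAt (fun t => (Function.update p γ t β) ^ 2)
      (if β = γ then 2 * p γ else 0) (p γ) := by
  have h := (updHasDeriv p γ β (p γ)).fun_pow 2
  simp only [Function.update_eq_self] at h
  refine h.congr_deriv ?_
  rcases eq_or_ne β γ with hh | hh <;> simp [hh]

lemma sumSqHasDeriv (γ : Fin m) :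
    HasDerivAt (fun t => ∑ β, (Function.update p γ t β) ^ 2) (2 * p γ) (p γ) := by
  have h := HasDerivAt.fun_sum (fun β (_ : β ∈ univ) => sqUpdHasDeriv p γ β)
  simpa [Finset.sum_ite_eq'] using h

lemma JHasDeriv (γ : Fin m) :
    HasDerivAt (fun t => Jfun a (Function.update p γ t)) (a γ * (2 * p γ)) (p γ) := by
  simp only [Jfun]
  have h := HasDerivAt.fun_sum (fun β (_ : β ∈ univ) => (sqUpdHasDeriv p γ β).const_mul (a β))
  simpa [mul_ite, mul_zero, Finset.sum_ite_eq'] using h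

lemma BqHasDeriv (γ : Fin m) :
    HasDerivAt (fun t => Bq a (Function.update q γ t)) (2 * q γ / a γ) (q γ) := by
  simp only [Bq]
  have h := HasDerivAt.fun_sum (fun β (_ : β ∈ univ) => (sqUpdHasDeriv q γ β).div_const (a β))
  simpa [ite_div, zero_div, Finset.sum_ite_eq'] using h

lemma pderivP_Ham (γ : Fin m) : pderivP (Ham a) γ p q = Bq a q * p γ := by
  simp only [pderivP, Ham]
  have h := (sumSqHasDeriv p γ).const_mul ((1:ℝ) / 2 * Bq a q)
  rw [h.deriv]; ring

lemma pderivQ_Ham (γ : Fin m) :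
    pderivQ (Ham a) γ p q = q γ / a γ * ∑ β, (p β) ^ 2 := by
  simp only [pderivQ, Ham]
  have h := ((BqHasDeriv a q γ).const_mul ((1:ℝ) / 2)).mul_const (∑ β, (p β) ^ 2)
  rw [h.deriv]; ring

lemma pderivP_Afun (α γ : Fin m) :
    pderivP (Afun a α) γ p q = q α ^ 2 * (a γ * (2 * p γ)) := by
  simp only [pderivP, Afun]
  have h := (JHasDeriv a p γ).const_mul (q α ^ 2)
  rw [h.deriv]

lemma pderivQ_Afun (α γ : Fin m) :
    pderivQ (Afun a α) γ p q = (if α = γ then 2 * q γ else 0) * Jfun a p := by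
  simp only [pderivQ, Afun]
  have h := (sqUpdHasDeriv q γ α).mul_const (Jfun a p)
  rw [h.deriv]

lemma MpHasDeriv (α β γ : Fin m) :
    HasDerivAt (fun t => Mfun a α β (Function.update p γ t) q)
      (a α * (if α = γ then 1 else 0) * q β - a β * (if β = γ then 1 else 0) * q α)
      (p γ) := by
  simp only [Mfun]
  exact (((updHasDeriv p γ α (p γ)).const_mul (a α)).mul_const (q β)).sub
    (((updHasDeriv p γ β (p γ)).const_mul (a β)).mul_const (q α))

lemma MqHasDeriv (α β γ : Fin m) :
    HasDerivAt (fun t => Mfun a α β p (Function.update q γ t))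
      (a α * p α * (if β = γ then 1 else 0) - a β * p β * (if α = γ then 1 else 0))
      (q γ) := by
  simp only [Mfun]
  exact ((updHasDeriv q γ β (q γ)).const_mul (a α * p α)).sub
    ((updHasDeriv q γ α (q γ)).const_mul (a β * p β))

lemma pderivP_Bfun (α γ : Fin m) :
    pderivP (Bfun a α) γ p q = ∑ β ∈ univ \ {α},
      2 * Mfun a α β p q *
        (a α * (if α = γ then 1 else 0) * q β - a β * (if β = γ then 1 else 0) * q α)
        / (a α - a β) := by
  simp only [pderivP, Bfun]
  have h := HasDerivAt.fun_sum (u := univ \ {α})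
    (fun β _ => ((MpHasDeriv a p q α β γ).fun_pow 2).div_const (a α - a β))
  rw [h.deriv]
  refine Finset.sum_congr rfl fun β _ => ?_
  simp only [Function.update_eq_self]
  push_cast
  ring

lemma pderivQ_Bfun (α γ : Fin m) :
    pderivQ (Bfun a α) γ p q = ∑ β ∈ univ \ {α},
      2 * Mfun a α β p q *
        (a α * p α * (if β = γ then 1 else 0) - a β * p β * (if α = γ then 1 else 0))
        / (a α - a β) := by
  simp only [pderivQ, Bfun]
  have h := HasDerivAt.fun_sum (u := univ \ {α})
    (fun β _ => ((MqHasDeriv a p q α β γ).fun_pow 2).div_const (a α - a β))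
  rw [h.deriv]
  refine Finset.sum_congr rfl fun β _ => ?_
  simp only [Function.update_eq_self]
  push_cast
  ring

end Helpers

/-- on the open set `B(q) ≠ 0`,
`{H, A_α} = 2 J B q_α p_α − 4 q_α² (H/B) Σ_β p_β q_β` and
`{H, B_α} = −2 J B q_α p_α + 2 B a_α p_α² Σ_β p_β q_β`, for every `α`. -/
theorem poisson_ham_building_blocks (n : ℕ) (hn : 1 ≤ n)
    (a : Fin (n + 1) → ℝ) (ha0 : 0 < a 0) (hmono : StrictMono a)
    (α : Fin (n + 1)) (p q : Fin (n + 1) → ℝ) (hB : Bq a q ≠ 0) :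
    pbracket (Ham a) (Afun a α) p q
      = 2 * Jfun a p * Bq a q * q α * p α
        - 4 * (q α) ^ 2 * (Ham a p q / Bq a q) * ∑ β, p β * q β ∧
    pbracket (Ham a) (Bfun a α) p q
      = -2 * Jfun a p * Bq a q * q α * p α
        + 2 * Bq a q * a α * (p α) ^ 2 * ∑ β, p β * q β := by
  have ha : ∀ γ, a γ ≠ 0 := fun γ =>
    (lt_of_lt_of_le ha0 (hmono.monotone (Fin.zero_le γ))).ne'
  set S := ∑ β, (p β) ^ 2 with hS
  set PQ := ∑ β, p β * q β with hPQ
  constructor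
  · -- part 1
    rw [pbracket]
    simp only [pderivP_Ham, pderivQ_Ham, pderivP_Afun, pderivQ_Afun, ← hS, ← hPQ]
    rw [Finset.sum_sub_distrib]
    have e1 : ∑ γ, Bq a q * p γ * ((if α = γ then 2 * q γ else 0) * Jfun a p)
        = Bq a q * p α * (2 * q α * Jfun a p) := by
      have : ∀ γ, Bq a q * p γ * ((if α = γ then 2 * q γ else 0) * Jfun a p)
          = if α = γ then Bq a q * p γ * (2 * q γ * Jfun a p) else 0 := by
        intro γ; split_ifs <;> simp
      simp only [this, Finset.sum_ite_eq, mem_univ, if_true]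
    have e2 : ∑ γ, q γ / a γ * S * (q α ^ 2 * (a γ * (2 * p γ)))
        = q α ^ 2 * 2 * S * PQ := by
      have : ∀ γ ∈ univ, q γ / a γ * S * (q α ^ 2 * (a γ * (2 * p γ)))
          = q α ^ 2 * 2 * S * (p γ * q γ) := by
        intro γ _
        field_simp [ha γ]
      rw [Finset.sum_congr rfl this, ← Finset.mul_sum, hPQ]
    rw [e1, e2, Ham]
    field_simp
    ring
  · -- part 2
    rw [pbracket]
    simp only [pderivP_Ham, pderivQ_Ham, pderivP_Bfun, pderivQ_Bfun, ← hS, ← hPQ]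
    rw [Finset.sum_sub_distrib]
    have hd : ∀ β ∈ univ \ {α}, a α - a β ≠ 0 := by
      intro β hβ
      rw [Finset.mem_sdiff, Finset.mem_singleton] at hβ
      exact sub_ne_zero_of_ne (hmono.injective.ne (Ne.symm hβ.2))
    have T1 : ∑ γ, Bq a q * p γ * (∑ β ∈ univ \ {α},
          2 * Mfun a α β p q *
            (a α * p α * (if β = γ then 1 else 0) - a β * p β * (if α = γ then 1 else 0))
            / (a α - a β))
        = Bq a q * (2 * p α) * (a α * p α * PQ - q α * Jfun a p) := by
      have step1 : ∀ γ, Bq a q * p γ * (∑ β ∈ univ \ {α},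
            2 * Mfun a α β p q *
              (a α * p α * (if β = γ then 1 else 0) - a β * p β * (if α = γ then 1 else 0))
              / (a α - a β))
          = ∑ β ∈ univ \ {α}, ((if β = γ then
                Bq a q * (2 * Mfun a α β p q * (a α * p α) / (a α - a β)) * p γ else 0)
              - (if α = γ then
                Bq a q * (2 * Mfun a α β p q * (a β * p β) / (a α - a β)) * p γ else 0)) := by
        intro γ
        rw [Finset.mul_sum]
        refine Finset.sum_congr rfl fun β _ => ?_
        split_ifs <;> ring
      simp only [step1]
      rw [Finset.sum_comm]
      have step2 : ∀ β ∈ univ \ {α}, (∑ γ, ((if β = γ then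
                Bq a q * (2 * Mfun a α β p q * (a α * p α) / (a α - a β)) * p γ else 0)
              - (if α = γ then
                Bq a q * (2 * Mfun a α β p q * (a β * p β) / (a α - a β)) * p γ else 0)))
          = Bq a q * (2 * p α) * (Mfun a α β p q * p β) := by
        intro β hβ
        rw [Finset.sum_sub_distrib]
        simp only [Finset.sum_ite_eq, mem_univ, if_true]
        field_simp [hd β hβ]
      rw [Finset.sum_congr rfl step2, ← Finset.mul_sum]
      congr 1
      have hMα : Mfun a α α p q * p α = 0 := by simp [Mfun]
      rw [Finset.sdiff_singleton_eq_erase,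
        show (∑ i ∈ univ.erase α, Mfun a α i p q * p i)
            = ∑ i, Mfun a α i p q * p i from Finset.sum_erase _ hMα]
      have : ∀ β ∈ univ, Mfun a α β p q * p β
          = a α * p α * (p β * q β) - q α * (a β * (p β) ^ 2) := by
        intro β _; simp only [Mfun]; ring
      rw [Finset.sum_congr rfl this, Finset.sum_sub_distrib, ← Finset.mul_sum,
        ← Finset.mul_sum, ← hPQ, Jfun]
    have T2 : ∑ γ, q γ / a γ * S * (∑ β ∈ univ \ {α},
          2 * Mfun a α β p q *
            (a α * (if α = γ then 1 else 0) * q β - a β * (if β = γ then 1 else 0) * q α)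
            / (a α - a β))
        = 0 := by
      have step1 : ∀ γ, q γ / a γ * S * (∑ β ∈ univ \ {α},
            2 * Mfun a α β p q *
              (a α * (if α = γ then 1 else 0) * q β - a β * (if β = γ then 1 else 0) * q α)
              / (a α - a β))
          = ∑ β ∈ univ \ {α}, ((if α = γ then
                S * (2 * Mfun a α β p q * a α * q β / (a α - a β)) * (q γ / a γ) else 0)
              - (if β = γ then
                S * (2 * Mfun a α β p q * a β * q α / (a α - a β)) * (q γ / a γ) else 0)) := by
        intro γ
        rw [Finset.mul_sum]
        refine Finset.sum_congr rfl fun β _ => ?_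
        split_ifs <;> ring
      simp only [step1]
      rw [Finset.sum_comm]
      refine Finset.sum_eq_zero fun β hβ => ?_
      rw [Finset.sum_sub_distrib]
      simp only [Finset.sum_ite_eq, mem_univ, if_true]
      rw [sub_eq_zero]
      field_simp [ha α, ha β, hd β hβ]
    rw [T1, T2, sub_zero]
    ring
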